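/- arXiv:1002.0080 — 3 statements merged into one kernel-verified Lean document; each statement's English description precedes it below -/
import Mathlib

section
/- For dimension d ≥ 3, for every smooth compactly supported function u on ℝ^d \ {0}, the Hardy inequality holds: ((d-2)²/4) ∫_{ℝ^d} |u(x)|²/|x|² dx ≤ ∫_{ℝ^d} |∇u(x)|² dx. -/
open MeasureTheory Set

section Hardy

variable {d : ℕ}

local notation "E" => EuclideanSpace ℝ (Fin d)

private lemma hardy_sum_single_eq (x : E) : ∑ i, x i • EuclideanSpace.single i (1:ℝ) = x := by
  ext j
  simp [WithLp.ofLp_sum, Finset.sum_apply, EuclideanSpace.single_apply, Pi.single_apply]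

private lemma hardy_norm_sq_eq_sum (x : E) : ‖x‖^2 = ∑ i, x i ^ 2 := by
  rw [← real_inner_self_eq_norm_sq, PiLp.inner_apply]
  simp [sq]

private lemma hardy_exists_chi (r : ℝ) (hr : 0 < r) : ∃ χ : E → ℝ, ContDiff ℝ (⊤ : ℕ∞) χ ∧
    (∀ x : E, ‖x‖ ≤ r/3 → χ x = 0) ∧ (∀ x : E, r/2 ≤ ‖x‖ → χ x = 1) := by
  set D : ℝ := (r/2)^2 - (r/3)^2 with hD
  have hDpos : 0 < D := by rw [hD]; nlinarith
  refine ⟨fun x => Real.smoothTransition ((‖x‖^2 - (r/3)^2) / D), ?_, ?_, ?_⟩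
  · exact Real.smoothTransition.contDiff.comp
      ((((contDiff_norm_sq ℝ : ContDiff ℝ (⊤ : ℕ∞) fun x : E => ‖x‖^2)).sub contDiff_const).div_const D)
  · intro x hx
    apply Real.smoothTransition.zero_of_nonpos
    apply div_nonpos_of_nonpos_of_nonneg _ hDpos.le
    nlinarith [norm_nonneg x]
  · intro x hx
    apply Real.smoothTransition.one_of_one_le
    rw [le_div_iff₀ hDpos]
    nlinarith [norm_nonneg x]

private lemma hardy_w_contDiff (χ : E → ℝ) (hχ : ContDiff ℝ (⊤ : ℕ∞) χ) {ε : ℝ} (hε : 0 < ε)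
    (h0 : ∀ x : E, ‖x‖ ≤ ε → χ x = 0) :
    ContDiff ℝ (⊤ : ℕ∞) (fun x : E => χ x • ((‖x‖^2)⁻¹ • x)) := by
  rw [contDiff_iff_contDiffAt]
  intro x
  by_cases hx : ‖x‖ < ε
  · have hmem : Metric.ball (0:E) ε ∈ nhds x :=
      Metric.isOpen_ball.mem_nhds (by simpa [mem_ball_zero_iff] using hx)
    have heq : (fun x : E => χ x • ((‖x‖^2)⁻¹ • x)) =ᶠ[nhds x] fun _ => (0:E) := by
      filter_upwards [hmem] with y hy
      rw [h0 y (le_of_lt (mem_ball_zero_iff.mp hy))]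
      simp
    exact (contDiffAt_const (c := (0:E))).congr_of_eventuallyEq heq
  · have hx0 : x ≠ 0 := by
      intro h; apply hx; simpa [h] using hε
    have hns : (‖x‖:ℝ)^2 ≠ 0 := pow_ne_zero 2 (norm_ne_zero_iff.mpr hx0)
    exact hχ.contDiffAt.smul
      ((((contDiff_norm_sq ℝ).contDiffAt).inv hns).smul contDiffAt_id)

private lemma hardy_div_v (x : E) (hx : x ≠ 0) :
    ∑ i, fderiv ℝ (fun y : E => (‖y‖^2)⁻¹ * y i) x (EuclideanSpace.single i 1)
      = ((d:ℝ) - 2) * (‖x‖^2)⁻¹ := by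
  have hns : (‖x‖:ℝ)^2 ≠ 0 := pow_ne_zero 2 (norm_ne_zero_iff.mpr hx)
  have h1 : HasFDerivAt (fun y : E => ‖y‖^2) (2 • (innerSL ℝ x)) x := by
    simpa using (hasFDerivAt_id x).norm_sq
  have key : ∀ i : Fin d, fderiv ℝ (fun y : E => (‖y‖^2)⁻¹ * y i) x (EuclideanSpace.single i 1)
      = (‖x‖^2)⁻¹ - ((‖x‖^2)^2)⁻¹ * (2 * x i ^ 2) := by
    intro i
    have hinv : HasFDerivAt (fun y : E => (‖y‖^2)⁻¹)
        ((ContinuousLinearMap.smulRight (1 : ℝ →L[ℝ] ℝ) (-((‖x‖^2)^2)⁻¹)).comp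
          (2 • (innerSL ℝ x))) x := (hasFDerivAt_inv hns).comp x h1
    have hi : HasFDerivAt (fun y : E => (‖y‖^2)⁻¹ * y i)
        ((‖x‖^2)⁻¹ • (EuclideanSpace.proj i : E →L[ℝ] ℝ) + x i •
          ((ContinuousLinearMap.smulRight (1 : ℝ →L[ℝ] ℝ) (-((‖x‖^2)^2)⁻¹)).comp
            (2 • (innerSL ℝ x)))) x := hinv.mul (EuclideanSpace.proj (𝕜 := ℝ) i).hasFDerivAt
    rw [hi.fderiv]
    simp [ContinuousLinearMap.mulLeftRight_apply, real_inner_comm, EuclideanSpace.inner_single_right]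
    ring
  rw [Finset.sum_congr rfl (fun i _ => key i), Finset.sum_sub_distrib, ← Finset.mul_sum,
    Finset.sum_const, ← Finset.mul_sum, ← hardy_norm_sq_eq_sum]
  simp only [Finset.card_univ, Fintype.card_fin, nsmul_eq_mul]
  field_simp

end Hardy

/-- Hardy's inequality: for `d ≥ 3` and `u ∈ C_0^∞(ℝ^d \ {0})`,
`((d-2)²/4) ∫ |u|²/|x|² dx ≤ ∫ |∇u|² dx`. -/
theorem hardy_inequality (d : ℕ) (hd : 3 ≤ d) (u : EuclideanSpace ℝ (Fin d) → ℝ)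
    (hu : ContDiff ℝ (⊤ : ℕ∞) u) (hsupp : HasCompactSupport u)
    (h0 : tsupport u ⊆ {x | x ≠ 0}) :
    ((d : ℝ) - 2) ^ 2 / 4 * ∫ x, u x ^ 2 / ‖x‖ ^ 2 ≤ ∫ x, ‖gradient u x‖ ^ 2 := by
  classical
  set K := tsupport u with hK
  rcases K.eq_empty_or_nonempty with hKe | hKne
  · -- trivial case : u = 0
    have hu0 : u = fun _ => 0 := by
      funext x
      exact image_eq_zero_of_notMem_tsupport (by rw [← hK, hKe]; exact notMem_empty x)
    rw [hu0]
    have hg : ∀ x : EuclideanSpace ℝ (Fin d), gradient (fun _ => (0:ℝ)) x = 0 := by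
      intro x
      simp [gradient, fderiv_fun_const]
    simp [hg]
  · -- main case
    set r := Metric.infDist 0 K with hr
    have hrpos : 0 < r := by
      rw [hr]
      refine (IsClosed.notMem_iff_infDist_pos (isClosed_tsupport u) hKne).mp ?_
      intro h
      exact (h0 h) rfl
    have hKr : ∀ x ∈ K, r ≤ ‖x‖ := by
      intro x hx
      calc r ≤ dist 0 x := Metric.infDist_le_dist_of_mem hx
        _ = ‖x‖ := by rw [dist_comm, dist_zero_right]
    obtain ⟨χ, hχ, hχ0, hχ1⟩ := hardy_exists_chi r hrpos
    set w : EuclideanSpace ℝ (Fin d) → EuclideanSpace ℝ (Fin d) :=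
      fun x => χ x • ((‖x‖^2)⁻¹ • x) with hw_def
    have hw : ContDiff ℝ (⊤ : ℕ∞) w :=
      hardy_w_contDiff χ hχ (by positivity) hχ0
    have hu' : ContDiff ℝ (⊤ : ℕ∞) u := hu.of_le (by simp)
    have hud : Differentiable ℝ u := hu.differentiable (by simp)
    set es : Fin d → EuclideanSpace ℝ (Fin d) := fun i => EuclideanSpace.single i 1 with hes
    set U : Set (EuclideanSpace ℝ (Fin d)) := {y | r/2 < ‖y‖} with hU
    have hUopen : IsOpen U := isOpen_lt continuous_const continuous_norm
    have hKU : K ⊆ U := fun x hx => lt_of_lt_of_le (by linarith) (hKr x hx)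
    have hwU : ∀ y ∈ U, w y = (‖y‖^2)⁻¹ • y := by
      intro y hy
      rw [hw_def]
      simp only [hχ1 y (le_of_lt hy), one_smul]
    have hsuppK : ∀ x, u x ≠ 0 → x ∈ K := fun x hx => subset_tsupport u hx
    have huK : ∀ x, x ∉ K → u x = 0 := fun x hx => image_eq_zero_of_notMem_tsupport hx
    have hxK0 : ∀ x ∈ K, x ≠ (0 : EuclideanSpace ℝ (Fin d)) := fun x hx => h0 hx
    -- norm of w on K
    have hwnorm : ∀ x ∈ K, ‖w x‖^2 = (‖x‖^2)⁻¹ := by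
      intro x hx
      have hx0 : x ≠ 0 := hxK0 x hx
      have hxn : ‖x‖ ≠ 0 := norm_ne_zero_iff.mpr hx0
      rw [hwU x (hKU hx), norm_smul]
      rw [Real.norm_eq_abs, abs_of_nonneg (by positivity)]
      field_simp
    have hnormw : ∀ x, u x ^ 2 * ‖w x‖^2 = u x ^ 2 / ‖x‖ ^ 2 := by
      intro x
      by_cases hux : u x = 0
      · simp [hux]
      · rw [hwnorm x (hsuppK x hux), div_eq_mul_inv]
    -- integrability helper
    have integ : ∀ h : EuclideanSpace ℝ (Fin d) → ℝ, Continuous h → (∀ x, x ∉ K → h x = 0) →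
        Integrable h := by
      intro h hc hz
      refine hc.integrable_of_hasCompactSupport (hsupp.mono' ?_)
      intro x hx
      by_contra hxK
      exact hx (hz x hxK)
    -- continuity facts
    have hgradc : Continuous (fun x => gradient u x) :=
      (InnerProductSpace.toDual ℝ (EuclideanSpace ℝ (Fin d))).symm.continuous.comp
        (hu.continuous_fderiv (by simp))
    have hfderivc : Continuous (fderiv ℝ u) := hu.continuous_fderiv (by simp)
    have hwc : Continuous w := hw.continuous
    have hgrad0 : ∀ x, x ∉ K → gradient u x = 0 := by
      intro x hx
      have : fderiv ℝ u x = 0 := by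
        have hsub := support_fderiv_subset ℝ (f := u)
        by_contra hne
        exact hx (hsub hne)
      simp [gradient, this]
    have hgradinner : ∀ x (v : EuclideanSpace ℝ (Fin d)),
        inner ℝ (gradient u x) v = fderiv ℝ u x v := by
      intro x v
      exact InnerProductSpace.toDual_symm_apply
    -- the three integrands
    set c : ℝ := ((d:ℝ) - 2)/2 with hc
    have hI1 : Integrable (fun x => ‖gradient u x‖^2) :=
      integ _ ((hgradc.norm).pow 2) (fun x hx => by rw [hgrad0 x hx]; simp)
    have hI2 : Integrable (fun x => u x * fderiv ℝ u x (w x)) :=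
      integ _ (hu'.continuous.mul (hfderivc.clm_apply hwc))
        (fun x hx => by rw [huK x hx]; ring)
    have hI3 : Integrable (fun x => u x ^ 2 * ‖w x‖^2) :=
      integ _ (((hu'.continuous.pow 2)).mul ((hwc.norm).pow 2))
        (fun x hx => by rw [huK x hx]; ring)
    -- positivity
    have hpos : 0 ≤ ∫ x, (‖gradient u x‖^2 + 2*c*(u x * fderiv ℝ u x (w x))
        + c^2*(u x ^ 2 * ‖w x‖^2)) := by
      apply integral_nonneg
      intro x
      have h1 : (0:ℝ) ≤ ‖gradient u x + (c * u x) • w x‖^2 := by positivity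
      rw [norm_add_sq_real, real_inner_smul_right, hgradinner, norm_smul, mul_pow,
        Real.norm_eq_abs, sq_abs] at h1
      refine le_trans h1 (le_of_eq ?_)
      ring
    have hsplit : ∫ x, (‖gradient u x‖^2 + 2*c*(u x * fderiv ℝ u x (w x))
        + c^2*(u x ^ 2 * ‖w x‖^2))
        = (∫ x, ‖gradient u x‖^2) + 2*c*(∫ x, u x * fderiv ℝ u x (w x))
          + c^2*(∫ x, u x ^ 2 * ‖w x‖^2) := by
      have hI12 : Integrable (fun x => ‖gradient u x‖^2 + 2*c*(u x * fderiv ℝ u x (w x))) :=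
        hI1.add (hI2.const_mul (2*c))
      rw [integral_add hI12 (hI3.const_mul (c^2)), integral_add hI1 (hI2.const_mul (2*c)),
        integral_const_mul, integral_const_mul]
    -- integration by parts
    set F : EuclideanSpace ℝ (Fin d) → ℝ := fun x => u x * u x with hF
    have hFd : Differentiable ℝ F := hud.mul hud
    have hFc : Continuous F := (hu.continuous.mul hu.continuous)
    have hF' : ∀ x v, fderiv ℝ F x v = 2*(u x * fderiv ℝ u x v) := by
      intro x v
      rw [hF, fderiv_fun_mul (hud x) (hud x)]
      simp
      ring
    have hF0 : ∀ x, x ∉ K → F x = 0 := by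
      intro x hx
      rw [hF]
      simp [huK x hx]
    have hFsub : tsupport F ⊆ K := by
      apply closure_minimal _ (isClosed_tsupport u)
      intro x hx
      by_contra hxK
      exact hx (hF0 x hxK)
    have hfderivF0 : ∀ x, x ∉ K → fderiv ℝ F x = 0 := by
      intro x hx
      by_contra hne
      exact hx (hFsub (support_fderiv_subset ℝ hne))
    have hFfc : Continuous (fderiv ℝ F) := (hu.mul hu).continuous_fderiv (by simp)
    -- coordinates of w
    have hwi_cd : ∀ i, ContDiff ℝ (⊤:ℕ∞) (fun x => w x i) :=
      fun i => (EuclideanSpace.proj (𝕜 := ℝ) i).contDiff.comp hw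
    have hwi_d : ∀ i, Differentiable ℝ (fun x => w x i) :=
      fun i => (hwi_cd i).differentiable (by simp)
    have hwi_c : ∀ i, Continuous (fun x => w x i) := fun i => (hwi_cd i).continuous
    have hwi'_c : ∀ i, Continuous (fun x => fderiv ℝ (fun y => w y i) x (es i)) :=
      fun i => ((hwi_cd i).continuous_fderiv (by simp)).clm_apply continuous_const
    -- integration by parts in each coordinate
    have hibp : ∀ i, ∫ x, w x i * fderiv ℝ F x (es i)
        = -∫ x, fderiv ℝ (fun y => w y i) x (es i) * F x := by
      intro i
      refine integral_mul_fderiv_eq_neg_fderiv_mul_of_integrable ?_ ?_ ?_ (fun x _ => hwi_d i x) (fun x _ => hFd x)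
      · exact integ _ ((hwi'_c i).mul hFc) (fun x hx => by rw [hF0 x hx, mul_zero])
      · exact integ _ ((hwi_c i).mul (hFfc.clm_apply continuous_const))
          (fun x hx => by rw [hfderivF0 x hx]; simp)
      · exact integ _ ((hwi_c i).mul hFc) (fun x hx => by rw [hF0 x hx, mul_zero])
    -- pointwise identity for the sum of coordinate products
    have hBpt : ∀ x, u x * fderiv ℝ u x (w x)
        = (1/2) * ∑ i, w x i * fderiv ℝ F x (es i) := by
      intro x
      have h2 : fderiv ℝ F x (w x) = ∑ i, w x i * fderiv ℝ F x (es i) := by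
        conv_lhs => rw [← hardy_sum_single_eq (w x)]
        rw [map_sum]
        refine Finset.sum_congr rfl fun i _ => ?_
        rw [_root_.map_smul, hes]
        simp
      have h1 := hF' x (w x)
      rw [h1] at h2
      rw [← h2]
      ring
    -- pointwise divergence identity
    have hdivpt : ∀ x, ∑ i, fderiv ℝ (fun y => w y i) x (es i) * F x
        = ((d:ℝ)-2) * (u x ^ 2 * ‖w x‖^2) := by
      intro x
      by_cases hux : u x = 0
      · rw [hF]
        simp [hux]
      · have hxK : x ∈ K := hsuppK x hux
        have hx0 : x ≠ (0 : EuclideanSpace ℝ (Fin d)) := hxK0 x hxK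
        have hUx : U ∈ nhds x := hUopen.mem_nhds (hKU hxK)
        have hfeq : ∀ i, fderiv ℝ (fun y => w y i) x (es i)
            = fderiv ℝ (fun y : EuclideanSpace ℝ (Fin d) => (‖y‖^2)⁻¹ * y i) x (es i) := by
          intro i
          have heq : (fun y => w y i)
              =ᶠ[nhds x] (fun y : EuclideanSpace ℝ (Fin d) => (‖y‖^2)⁻¹ * y i) := by
            filter_upwards [hUx] with y hy
            rw [hwU y hy]
            simp
          rw [heq.fderiv_eq]
        have hsum : ∑ i, fderiv ℝ (fun y => w y i) x (es i) * F x
            = ∑ i, fderiv ℝ (fun y : EuclideanSpace ℝ (Fin d) => (‖y‖^2)⁻¹ * y i) x (es i) * F x :=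
          Finset.sum_congr rfl fun i _ => by rw [hfeq i]
        rw [hsum, ← Finset.sum_mul]
        simp only [hes]
        rw [hardy_div_v x hx0, hwnorm x hxK, hF]
        ring
    -- compute the middle integral
    have hB : ∫ x, u x * fderiv ℝ u x (w x)
        = -(((d:ℝ)-2)/2) * ∫ x, u x ^ 2 * ‖w x‖^2 := by
      have hIsum : ∀ i : Fin d, Integrable (fun x => w x i * fderiv ℝ F x (es i)) :=
        fun i => integ _ ((hwi_c i).mul (hFfc.clm_apply continuous_const))
          (fun x hx => by rw [hfderivF0 x hx]; simp)
      have hIsum' : ∀ i : Fin d,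
          Integrable (fun x => fderiv ℝ (fun y => w y i) x (es i) * F x) :=
        fun i => integ _ ((hwi'_c i).mul hFc) (fun x hx => by rw [hF0 x hx, mul_zero])
      calc ∫ x, u x * fderiv ℝ u x (w x)
          = ∫ x, (1/2) * ∑ i, w x i * fderiv ℝ F x (es i) := by
            rw [show (fun x => u x * fderiv ℝ u x (w x))
              = fun x => (1/2) * ∑ i, w x i * fderiv ℝ F x (es i) from funext hBpt]
        _ = (1/2) * ∑ i, ∫ x, w x i * fderiv ℝ F x (es i) := by
            rw [integral_const_mul, integral_finset_sum _ (fun i _ => hIsum i)]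
        _ = (1/2) * ∑ i, -∫ x, fderiv ℝ (fun y => w y i) x (es i) * F x := by
            rw [Finset.sum_congr rfl fun i _ => hibp i]
        _ = -(1/2) * ∫ x, ∑ i, fderiv ℝ (fun y => w y i) x (es i) * F x := by
            rw [integral_finset_sum _ (fun i _ => hIsum' i), Finset.sum_neg_distrib]
            ring
        _ = -(1/2) * ∫ x, ((d:ℝ)-2) * (u x ^ 2 * ‖w x‖^2) := by
            rw [show (fun x => ∑ i, fderiv ℝ (fun y => w y i) x (es i) * F x)
              = fun x => ((d:ℝ)-2) * (u x ^ 2 * ‖w x‖^2) from funext hdivpt]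
        _ = -(((d:ℝ)-2)/2) * ∫ x, u x ^ 2 * ‖w x‖^2 := by
            rw [integral_const_mul]
            ring
    -- conclusion
    have hCeq : ∫ x, u x ^ 2 / ‖x‖ ^ 2 = ∫ x, u x ^ 2 * ‖w x‖^2 := by
      rw [show (fun x : EuclideanSpace ℝ (Fin d) => u x ^ 2 / ‖x‖ ^ 2)
        = fun x => u x ^ 2 * ‖w x‖^2 from funext (fun x => (hnormw x).symm)]
    rw [hCeq]
    rw [hsplit, hB] at hpos
    have hkey : (∫ x, ‖gradient u x‖^2)
        + 2*c*(-(((d:ℝ)-2)/2) * ∫ x, u x ^ 2 * ‖w x‖^2)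
        + c^2*(∫ x, u x ^ 2 * ‖w x‖^2)
        = (∫ x, ‖gradient u x‖^2) - ((d:ℝ)-2)^2/4 * ∫ x, u x ^ 2 * ‖w x‖^2 := by
      rw [hc]
      ring
    rw [hkey] at hpos
    linarith
end

section
/- Let d ≥ 3 and V(x) = (d-2)²/(4(1+|x|²)). Then for every u ∈ C_0^∞(ℝ^d), ∫ V(x)|u(x)|² dx ≤ ∫ |∇u(x)|² dx; i.e., the quadratic form of -Δ - V is nonnegative. -/
open MeasureTheory InnerProductSpace

set_option maxHeartbeats 1000000 in
/-- For `d ≥ 3` and `V(x) = (d-2)²/(4(1+|x|²))`, the quadratic form of `-Δ - V` is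
nonnegative: `∫ V|u|² dx ≤ ∫ |∇u|² dx` for all `u ∈ C_0^∞(ℝ^d)`. -/
theorem form_nonneg_of_hardy_potential (d : ℕ) (hd : 3 ≤ d)
    (V : EuclideanSpace ℝ (Fin d) → ℝ)
    (hVdef : ∀ x, V x = ((d : ℝ) - 2) ^ 2 / (4 * (1 + ‖x‖ ^ 2)))
    (u : EuclideanSpace ℝ (Fin d) → ℝ)
    (hu : ContDiff ℝ (⊤ : ℕ∞) u) (hsupp : HasCompactSupport u) :
    ∫ x, V x * u x ^ 2 ≤ ∫ x, ‖gradient u x‖ ^ 2 := by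
  classical
  have hd3 : (3:ℝ) ≤ (d:ℝ) := by exact_mod_cast hd
  set c : ℝ := ((d:ℝ) - 2) / 2 with hc_def
  have hc : 0 < c := by rw [hc_def]; linarith
  set q : EuclideanSpace ℝ (Fin d) → ℝ := fun x => 1 + ‖x‖ ^ 2 with hq_def
  have hq0 : ∀ x, 0 < q x := fun x => by positivity
  have hqc : Continuous q := continuous_const.add (continuous_norm.pow 2)
  set e : Fin d → EuclideanSpace ℝ (Fin d) := fun i => EuclideanSpace.single i (1:ℝ) with he_def
  set P : Fin d → EuclideanSpace ℝ (Fin d) → ℝ := fun i x => (-c * x i) * (q x)⁻¹ with hP_def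
  set A : Fin d → EuclideanSpace ℝ (Fin d) → ℝ :=
    fun i x => -c * (q x)⁻¹ + 2 * c * (x i * x i) * ((q x)⁻¹ * (q x)⁻¹) with hA_def
  set T : EuclideanSpace ℝ (Fin d) → ℝ := fun x => ∑ i, P i x * P i x with hT_def
  set W : EuclideanSpace ℝ (Fin d) → ℝ := fun x => (∑ i, -(A i x)) - T x with hW_def
  set g : EuclideanSpace ℝ (Fin d) → ℝ := fun x => u x * u x with hg_def
  -- sums of squares of coordinates
  have hsum_sq : ∀ y : EuclideanSpace ℝ (Fin d), ∑ i, y i * y i = ‖y‖ * ‖y‖ := by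
    intro y
    rw [← real_inner_self_eq_norm_mul_norm, PiLp.inner_apply]
    simp [RCLike.inner_apply]
    simp only [sq]
  -- derivatives
  have hqd : ∀ x, HasFDerivAt q (2 • (innerSL ℝ x)) x := fun x =>
    (hasStrictFDerivAt_norm_sq x).hasFDerivAt.const_add 1
  have hqinv : ∀ x, HasFDerivAt (fun y => (q y)⁻¹)
      ((-(ContinuousLinearMap.mulLeftRight ℝ ℝ (q x)⁻¹ (q x)⁻¹)).comp (2 • innerSL ℝ x)) x :=
    fun x => (hasFDerivAt_inv' (𝕜 := ℝ) (hq0 x).ne').comp x (hqd x)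
  have hcoord : ∀ (i : Fin d) (x : EuclideanSpace ℝ (Fin d)),
      HasFDerivAt (fun y : EuclideanSpace ℝ (Fin d) => -c * y i)
        ((-c) • (EuclideanSpace.proj i : EuclideanSpace ℝ (Fin d) →L[ℝ] ℝ)) x :=
    fun i x =>
      ((EuclideanSpace.proj i : EuclideanSpace ℝ (Fin d) →L[ℝ] ℝ).hasFDerivAt
        (x := x)).const_mul (-c)
  have hPderiv : ∀ (i : Fin d) (x : EuclideanSpace ℝ (Fin d)),
      HasFDerivAt (P i)
        ((-c * x i) • ((-(ContinuousLinearMap.mulLeftRight ℝ ℝ (q x)⁻¹ (q x)⁻¹)).comp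
            (2 • innerSL ℝ x))
          + (q x)⁻¹ • ((-c) • (EuclideanSpace.proj i : EuclideanSpace ℝ (Fin d) →L[ℝ] ℝ))) x :=
    fun i x => (hcoord i x).mul (hqinv x)
  have hPdiff : ∀ i, Differentiable ℝ (P i) := fun i x => (hPderiv i x).differentiableAt
  have hA : ∀ (i : Fin d) x, fderiv ℝ (P i) x (e i) = A i x := by
    intro i x
    rw [(hPderiv i x).fderiv]
    simp only [he_def, hA_def, ContinuousLinearMap.add_apply, ContinuousLinearMap.coe_smul',
      Pi.smul_apply, ContinuousLinearMap.comp_apply, ContinuousLinearMap.neg_apply,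
      ContinuousLinearMap.smul_apply, ContinuousLinearMap.mulLeftRight_apply, innerSL_apply_apply,
      smul_eq_mul, EuclideanSpace.inner_single_right, conj_trivial, PiLp.proj_apply,
      EuclideanSpace.single_apply, if_true, if_pos rfl]
    ring
  -- continuity
  have hPc : ∀ i, Continuous (P i) := fun i =>
    (continuous_const.mul (EuclideanSpace.proj i).continuous).mul
      (hqc.inv₀ fun x => (hq0 x).ne')
  have hAc : ∀ i, Continuous (A i) := by
    intro i
    have h1 : Continuous fun x : EuclideanSpace ℝ (Fin d) => (q x)⁻¹ :=
      hqc.inv₀ fun x => (hq0 x).ne'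
    exact (continuous_const.mul h1).add
      ((continuous_const.mul ((EuclideanSpace.proj i).continuous.mul
        (EuclideanSpace.proj i).continuous)).mul (h1.mul h1))
  have hTc : Continuous T := continuous_finset_sum _ fun i _ => (hPc i).mul (hPc i)
  have hWc : Continuous W :=
    ((continuous_finset_sum _ fun i _ => (hAc i).neg).sub hTc)
  have hVc : Continuous V := by
    have hVe : V = fun x => ((d:ℝ) - 2) ^ 2 / (4 * q x) := funext fun x => hVdef x
    rw [hVe]
    exact continuous_const.div (continuous_const.mul hqc) fun x => by positivity
  -- g facts
  have hudiff : Differentiable ℝ u := hu.differentiable (by simp)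
  have hgCD : ContDiff ℝ (⊤ : ℕ∞) g := hu.mul hu
  have hgdiff : Differentiable ℝ g := hgCD.differentiable (by simp)
  have hgcs : HasCompactSupport g := hsupp.mul_right
  have hgderiv : ∀ x, HasFDerivAt g (u x • fderiv ℝ u x + u x • fderiv ℝ u x) x :=
    fun x => (hudiff x).hasFDerivAt.mul (hudiff x).hasFDerivAt
  have hDg : ∀ (i : Fin d) x, fderiv ℝ g x (e i) = 2 * u x * fderiv ℝ u x (e i) := by
    intro i x
    rw [(hgderiv x).fderiv]
    simp only [ContinuousLinearMap.add_apply, ContinuousLinearMap.coe_smul', Pi.smul_apply,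
      smul_eq_mul]
    ring
  have hDuc : ∀ i, Continuous fun x => fderiv ℝ u x (e i) := fun i =>
    (ContinuousLinearMap.apply ℝ ℝ (e i)).continuous.comp (hu.continuous_fderiv (by simp))
  have hDgc : ∀ i, Continuous fun x => fderiv ℝ g x (e i) := fun i =>
    (ContinuousLinearMap.apply ℝ ℝ (e i)).continuous.comp (hgCD.continuous_fderiv (by simp))
  have hDucs : ∀ i, HasCompactSupport fun x => fderiv ℝ u x (e i) :=
    fun i => hsupp.fderiv_apply ℝ (e i)
  have hDgcs : ∀ i, HasCompactSupport fun x => fderiv ℝ g x (e i) :=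
    fun i => hgcs.fderiv_apply ℝ (e i)
  -- integrability helpers
  have hIntCS : ∀ (F G : EuclideanSpace ℝ (Fin d) → ℝ), Continuous F → Continuous G →
      HasCompactSupport G → Integrable (fun x => F x * G x) := by
    intro F G hF hG hGcs
    exact (hF.mul hG).integrable_of_hasCompactSupport hGcs.mul_left
  have hInt : ∀ (F : EuclideanSpace ℝ (Fin d) → ℝ), Continuous F →
      Integrable (fun x => F x * g x) := by
    intro F hF
    exact hIntCS F g hF (hu.continuous.mul hu.continuous) hgcs
  -- integration by parts
  have key : ∀ i : Fin d, ∫ x, P i x * fderiv ℝ g x (e i) = - ∫ x, A i x * g x := by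
    intro i
    have h := integral_mul_fderiv_eq_neg_fderiv_mul_of_integrable
      (μ := (volume : Measure (EuclideanSpace ℝ (Fin d)))) (f := P i) (g := g) (v := e i)
      ?_ ?_ ?_ (fun x _ => hPdiff i x) (fun x _ => hgdiff x)
    · rw [h]
      congr 1
      refine integral_congr_ae (Filter.Eventually.of_forall fun x => ?_)
      show fderiv ℝ (P i) x (e i) * g x = A i x * g x
      rw [hA i x]
    · refine (hInt (A i) (hAc i)).congr (Filter.Eventually.of_forall fun x => ?_)
      show A i x * g x = fderiv ℝ (P i) x (e i) * g x
      rw [hA i x]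
    · exact hIntCS (P i) _ (hPc i) (hDgc i) (hDgcs i)
    · exact hInt (P i) (hPc i)
  -- pointwise inequality V ≤ W
  have hVW : ∀ x, V x ≤ W x := by
    intro x
    have hq1 : (0:ℝ) < 1 + ‖x‖ ^ 2 := by positivity
    have hsum2 : ∑ i, x i * x i = ‖x‖ ^ 2 := by rw [hsum_sq x]; ring
    have hWx : W x = (d:ℝ) * (c * (1 + ‖x‖ ^ 2)⁻¹)
        - 2 * c * ((1 + ‖x‖ ^ 2)⁻¹ * (1 + ‖x‖ ^ 2)⁻¹) * ‖x‖ ^ 2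
        - c * c * ((1 + ‖x‖ ^ 2)⁻¹ * (1 + ‖x‖ ^ 2)⁻¹) * ‖x‖ ^ 2 := by
      have h1 : (∑ i, -(A i x)) = ∑ i, (c * (1 + ‖x‖ ^ 2)⁻¹
          - 2 * c * ((1 + ‖x‖ ^ 2)⁻¹ * (1 + ‖x‖ ^ 2)⁻¹) * (x i * x i)) :=
        Finset.sum_congr rfl fun i _ => by simp only [hA_def, hq_def]; ring
      have h2 : T x = ∑ i, (c * c * ((1 + ‖x‖ ^ 2)⁻¹ * (1 + ‖x‖ ^ 2)⁻¹)) * (x i * x i) :=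
        Finset.sum_congr rfl fun i _ => by simp only [hP_def, hq_def]; ring
      show (∑ i, -(A i x)) - T x = _
      rw [h1, h2, Finset.sum_sub_distrib, Finset.sum_const, ← Finset.mul_sum, ← Finset.mul_sum,
        hsum2]
      simp only [Finset.card_univ, Fintype.card_fin, nsmul_eq_mul]
    have hVx : V x = c * c * (1 + ‖x‖ ^ 2)⁻¹ := by
      rw [hVdef x, hc_def]
      field_simp
      ring
    rw [hVx, hWx]
    have hs0 : (0:ℝ) ≤ ‖x‖ ^ 2 := by positivity
    have ha0 : (0:ℝ) < (1 + ‖x‖ ^ 2)⁻¹ := inv_pos.2 hq1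
    have ha1 : (1 + ‖x‖ ^ 2)⁻¹ * (1 + ‖x‖ ^ 2) = 1 := inv_mul_cancel₀ hq1.ne'
    set a : ℝ := (1 + ‖x‖ ^ 2)⁻¹ with ha_def
    set s : ℝ := ‖x‖ ^ 2 with hs_def
    have has : a * s = 1 - a := by linear_combination ha1
    have h3 : a * a * s = a - a * a := by
      rw [mul_assoc, has]; ring
    have hdca : (d:ℝ) * (c * a) = 2 * c * c * a + 2 * c * a := by
      have hdd : (d:ℝ) = 2 * c + 2 := by rw [hc_def]; ring
      rw [hdd]; ring
    have hpos : (0:ℝ) ≤ 2 * c * (a * a) + c * c * (a * a) := by positivity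
    have e2 : 2 * c * (a * a) * s = 2 * c * a - 2 * c * (a * a) := by
      linear_combination (2 * c) * h3
    have e3 : c * c * (a * a) * s = c * c * a - c * c * (a * a) := by
      linear_combination (c * c) * h3
    rw [hdca, e2, e3]
    linarith [hpos]
  -- gradient identity
  have hgradnorm : ∀ x, ‖gradient u x‖ * ‖gradient u x‖
      = ∑ i, fderiv ℝ u x (e i) * fderiv ℝ u x (e i) := by
    intro x
    have hg1 : ∀ v, fderiv ℝ u x v = inner ℝ (gradient u x) v := by
      intro v
      rw [gradient]
      exact toDual_symm_apply.symm
    rw [← hsum_sq (gradient u x)]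
    refine Finset.sum_congr rfl fun i _ => ?_
    rw [hg1 (e i), he_def]
    simp [EuclideanSpace.inner_single_right]
    rw [hg1, EuclideanSpace.inner_single_right]
    simp
  -- main chain
  simp only [pow_two]
  calc ∫ x, V x * (u x * u x) ≤ ∫ x, W x * (u x * u x) := by
        refine integral_mono (hInt V hVc) (hInt W hWc) fun x => ?_
        exact mul_le_mul_of_nonneg_right (hVW x) (mul_self_nonneg _)
    _ = (∑ i, ∫ x, -(A i x) * g x) - ∫ x, T x * g x := by
        have e1 : ∀ x, W x * (u x * u x) = (∑ i, -(A i x) * g x) - T x * g x := by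
          intro x
          show ((∑ i, -(A i x)) - T x) * (u x * u x) = _
          have hgx : g x = u x * u x := rfl
          rw [sub_mul, Finset.sum_mul, hgx]
        simp only [e1]
        rw [integral_sub (integrable_finset_sum _ fun i _ => hInt (fun x => -(A i x)) (hAc i).neg)
            (hInt T hTc),
          integral_finset_sum _ fun i _ => hInt (fun x => -(A i x)) (hAc i).neg]
    _ = (∑ i, ∫ x, P i x * fderiv ℝ g x (e i)) - ∫ x, T x * g x := by
        congr 1
        refine Finset.sum_congr rfl fun i _ => ?_
        rw [key i, ← integral_neg]
        refine integral_congr_ae (Filter.Eventually.of_forall fun x => ?_)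
        show -(A i x) * g x = -(A i x * g x)
        ring
    _ = ∫ x, ((∑ i, P i x * fderiv ℝ g x (e i)) - T x * g x) := by
        rw [integral_sub (integrable_finset_sum _ fun i _ =>
            hIntCS (P i) _ (hPc i) (hDgc i) (hDgcs i)) (hInt T hTc),
          integral_finset_sum _ fun i _ => hIntCS (P i) _ (hPc i) (hDgc i) (hDgcs i)]
    _ ≤ ∫ x, ∑ i, fderiv ℝ u x (e i) * fderiv ℝ u x (e i) := by
        refine integral_mono ?_ ?_ fun x => ?_
        · exact ((integrable_finset_sum _ fun i _ =>
            hIntCS (P i) _ (hPc i) (hDgc i) (hDgcs i)).sub (hInt T hTc))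
        · exact integrable_finset_sum _ fun i _ =>
            hIntCS _ _ (hDuc i) (hDuc i) (hDucs i)
        · show (∑ i, P i x * fderiv ℝ g x (e i)) - T x * g x
            ≤ ∑ i, fderiv ℝ u x (e i) * fderiv ℝ u x (e i)
          have hT : T x * g x = ∑ i, (P i x * P i x) * g x := by
            show (∑ i, P i x * P i x) * g x = _
            rw [Finset.sum_mul]
          rw [hT, ← Finset.sum_sub_distrib]
          refine Finset.sum_le_sum fun i _ => ?_
          rw [hDg i x]
          have hgx : g x = u x * u x := rfl
          rw [hgx]
          nlinarith [sq_nonneg (fderiv ℝ u x (e i) - P i x * u x)]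
    _ = ∫ x, ‖gradient u x‖ * ‖gradient u x‖ := by
        refine integral_congr_ae (Filter.Eventually.of_forall fun x => ?_)
        show ∑ i, fderiv ℝ u x (e i) * fderiv ℝ u x (e i) = ‖gradient u x‖ * ‖gradient u x‖
        rw [hgradnorm x]
end

section
/- Let ψ ∈ L²(ℝ²) with ‖ψ‖ > 0, let L > 0, and let x₀ = (a,b) maximize F(x₀) = ∫_{x₀+(-L,L)²}|ψ|²dx over ℝ². Define φ(x) = min{φ₀(ξ-a), φ₀(η-b)} for x=(ξ,η), where φ₀ is the piecewise linear cutoff equal to 1 on [-L,L], 0 outside [-3L,3L], and linear with slope ±1/(2L) in between. Then ∫_{ℝ²} |∇φ|² ψ² dx ≤ (2/L²) ∫_{x₀+(-L,L)²} |ψ|² dx. -/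
/-!
`φ` is `(2L)⁻¹`-Lipschitz, so `‖∇φ‖ ≤ 1/(2L)` everywhere, and `∇φ` vanishes on the open square
`x₀ + (-L, L)²`, where `φ = 1`, and outside `x₀ + [-3L, 3L]²`, where `φ = 0`. Off the null set of
lines `|xᵢ - x₀ᵢ| ∈ {L, 3L}`, every remaining point lies in one of the eight open squares
`Qₖ = x₀ + 2Lk + (-L, L)²` with `k ∈ {-1, 0, 1}² \ {0}`. Hence `‖∇φ‖² ψ² ≤ (4L²)⁻¹ ∑ₖ 1_{Qₖ} ψ²`
almost everywhere; integrating, with each `∫_{Qₖ} ψ²` bounded by the maximal one, gives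
`8/(4L²) = 2/L²`.
-/

open MeasureTheory Filter Topology
open scoped NNReal

noncomputable def trapezoidCutoff (L t : ℝ) : ℝ := max 0 (min 1 (3 / 2 - |t| / (2 * L)))

lemma trapezoidCutoff_eq_ite {L : ℝ} (hL : 0 < L) (t : ℝ) :
    trapezoidCutoff L t =
      if |t| < L then 1 else if 3 * L ≤ |t| then 0 else 3 / 2 - |t| / (2 * L) := by
  have hinner : |t| / (2 * L) < 1 / 2 ↔ |t| < L := by
    rw [div_lt_iff₀ (by positivity)]
    constructor <;> intro <;> linarith
  have houter : 3 / 2 ≤ |t| / (2 * L) ↔ 3 * L ≤ |t| := by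
    rw [le_div_iff₀ (by positivity)]
    constructor <;> intro <;> linarith
  unfold trapezoidCutoff
  split_ifs with h₁ h₃
  · rw [min_eq_left (by linarith [hinner.2 h₁]), max_eq_right zero_le_one]
  · rw [min_eq_right (by linarith [houter.2 h₃]), max_eq_left (by linarith [houter.2 h₃])]
  · rw [min_eq_right (by linarith [hinner.not.2 h₁]), max_eq_right (by linarith [houter.not.2 h₃])]

lemma trapezoidCutoff_nonneg (L t : ℝ) : 0 ≤ trapezoidCutoff L t := le_max_left _ _

lemma trapezoidCutoff_eq_one_of_abs_lt {L t : ℝ} (ht : |t| < L) : trapezoidCutoff L t = 1 := by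
  rw [trapezoidCutoff_eq_ite ((abs_nonneg t).trans_lt ht), if_pos ht]

lemma trapezoidCutoff_eq_zero_of_le_abs {L t : ℝ} (hL : 0 < L) (ht : 3 * L ≤ |t|) :
    trapezoidCutoff L t = 0 := by
  rw [trapezoidCutoff_eq_ite hL, if_neg (by linarith), if_pos ht]

lemma lipschitzWith_trapezoidCutoff (L : ℝ≥0) : LipschitzWith (2 * L)⁻¹ (trapezoidCutoff L) := by
  have hramp : LipschitzWith (2 * L)⁻¹ fun t : ℝ => 3 / 2 - |t| / (2 * L) := by
    refine LipschitzWith.of_dist_le_mul fun s t => ?_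
    rw [Real.dist_eq, Real.dist_eq, NNReal.coe_inv, NNReal.coe_mul, NNReal.coe_two,
      show 3 / 2 - |s| / (2 * L) - (3 / 2 - |t| / (2 * L)) = (2 * L : ℝ)⁻¹ * (|t| - |s|) by ring,
      abs_mul, abs_inv, abs_of_nonneg (by positivity : (0 : ℝ) ≤ 2 * L), abs_sub_comm s t]
    exact mul_le_mul_of_nonneg_left (abs_abs_sub_abs_le_abs_sub t s) (by positivity)
  exact (hramp.const_min 1).const_max 0

lemma norm_gradient_le_of_lipschitzWith {F : Type*} [NormedAddCommGroup F]
    [InnerProductSpace ℝ F] [CompleteSpace F] {f : F → ℝ} {C : ℝ≥0} (hf : LipschitzWith C f)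
    (x : F) : ‖gradient f x‖ ≤ C := by
  rw [gradient, LinearIsometryEquiv.norm_map]
  exact norm_fderiv_le_of_lipschitz ℝ hf

lemma integral_le_card_mul_of_ae_le_sum_indicator {α ι : Type*} [MeasurableSpace α]
    {μ : Measure α} {f g : α → ℝ} {s : Finset ι} {Q : ι → Set α} {M : ℝ}
    (hf : Integrable f μ) (hQ : ∀ k ∈ s, MeasurableSet (Q k))
    (hM : ∀ k ∈ s, ∫ x in Q k, f x ∂μ ≤ M) (hg : 0 ≤ᵐ[μ] g)
    (hle : g ≤ᵐ[μ] fun x => ∑ k ∈ s, (Q k).indicator f x) :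
    ∫ x, g x ∂μ ≤ s.card * M :=
  calc ∫ x, g x ∂μ ≤ ∫ x, ∑ k ∈ s, (Q k).indicator f x ∂μ :=
        integral_mono_of_nonneg hg (integrable_finsetSum s fun k hk => hf.indicator (hQ k hk)) hle
    _ = ∑ k ∈ s, ∫ x in Q k, f x ∂μ := by
        rw [integral_finsetSum s fun k hk => hf.indicator (hQ k hk)]
        exact Finset.sum_congr rfl fun k hk => integral_indicator (hQ k hk)
    _ ≤ s.card * M := by
        simpa only [Finset.sum_const, nsmul_eq_mul] using Finset.sum_le_sum hM

lemma exists_int_abs_sub_lt {L t : ℝ} (h₃ : |t| < 3 * L) (hne : |t| ≠ L) :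
    ∃ m ∈ Finset.Icc (-1 : ℤ) 1, |t - 2 * L * m| < L ∧ (L < |t| → m ≠ 0) := by
  rw [abs_lt] at h₃
  rcases lt_or_ge t (-L) with hneg | hneg
  · refine ⟨-1, by decide, ?_, by norm_num⟩
    rw [abs_lt]; push_cast; constructor <;> linarith
  rcases lt_or_ge L t with hpos | hpos
  · refine ⟨1, by decide, ?_, by norm_num⟩
    rw [abs_lt]; push_cast; constructor <;> linarith
  · have hlt : |t| < L := lt_of_le_of_ne (abs_le.2 ⟨hneg, hpos⟩) hne
    exact ⟨0, by decide, by simpa using hlt, fun h => absurd h hlt.not_gt⟩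

def openCube {ι : Type*} (L : ℝ) (y : EuclideanSpace ℝ ι) : Set (EuclideanSpace ℝ ι) :=
  {x | ∀ i, x i - y i ∈ Set.Ioo (-L) L}

noncomputable def cubeShift {ι : Type*} (L : ℝ) (k : ι → ℤ) : EuclideanSpace ℝ ι :=
  WithLp.toLp 2 fun i => 2 * L * k i

noncomputable def cubeShifts (ι : Type*) [Fintype ι] [DecidableEq ι] : Finset (ι → ℤ) :=
  (Fintype.piFinset fun _ => Finset.Icc (-1) 1).erase 0

section EuclideanSpace

variable {ι : Type*} [Fintype ι]

lemma EuclideanSpace.lipschitzWith_apply (i : ι) :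
    LipschitzWith 1 fun x : EuclideanSpace ℝ ι => x i :=
  LipschitzWith.of_dist_le_mul fun x y => by
    simpa [dist_eq_norm] using PiLp.norm_apply_le (x - y) i

lemma EuclideanSpace.ae_apply_ne (i : ι) (b : ℝ) : ∀ᵐ x : EuclideanSpace ℝ ι, x i ≠ b :=
  (PiLp.volume_preserving_ofLp ι).quasiMeasurePreserving.ae (Measure.ae_eval_ne _ i b)

lemma EuclideanSpace.ae_abs_apply_sub_ne (i : ι) (c r : ℝ) :
    ∀ᵐ x : EuclideanSpace ℝ ι, |x i - c| ≠ r := by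
  filter_upwards [ae_apply_ne i (c + r), ae_apply_ne i (c - r)] with x h₁ h₂ h
  rcases abs_choice (x i - c) with h' | h'
  exacts [h₁ (by linarith), h₂ (by linarith)]

lemma measurableSet_openCube (L : ℝ) (y : EuclideanSpace ℝ ι) : MeasurableSet (openCube L y) := by
  simp only [openCube, Set.ofPred_forall]
  exact MeasurableSet.iInter fun i => measurableSet_Ioo.preimage (by fun_prop)

lemma exists_mem_openCube_add_cubeShift [DecidableEq ι] {L : ℝ} {x x₀ : EuclideanSpace ℝ ι}
    (h₃ : ∀ i, |x i - x₀ i| < 3 * L) (hne : ∀ i, |x i - x₀ i| ≠ L)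
    (hout : ∃ i, L < |x i - x₀ i|) :
    ∃ k ∈ cubeShifts ι, x ∈ openCube L (x₀ + cubeShift L k) := by
  choose k hk hlt hk₀ using fun i => exists_int_abs_sub_lt (h₃ i) (hne i)
  obtain ⟨i, hi⟩ := hout
  refine ⟨k, Finset.mem_erase.2 ⟨fun h => hk₀ i hi (congrFun h i), Fintype.mem_piFinset.2 hk⟩,
    fun j => ?_⟩
  simpa [cubeShift, sub_add_eq_sub_sub, abs_lt] using hlt j

end EuclideanSpace

section SquareCutoff

variable {L : ℝ} {x₀ x : EuclideanSpace ℝ (Fin 2)}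

noncomputable def squareCutoff (L : ℝ) (x₀ y : EuclideanSpace ℝ (Fin 2)) : ℝ :=
  min (trapezoidCutoff L (y 0 - x₀ 0)) (trapezoidCutoff L (y 1 - x₀ 1))

lemma lipschitzWith_squareCutoff (L : ℝ≥0) (x₀ : EuclideanSpace ℝ (Fin 2)) :
    LipschitzWith (2 * L)⁻¹ (squareCutoff L x₀) := by
  have hcoord (i : Fin 2) : LipschitzWith (2 * L)⁻¹ fun y : EuclideanSpace ℝ (Fin 2) =>
      trapezoidCutoff L (y i - x₀ i) := by
    have h := (lipschitzWith_trapezoidCutoff L).comp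
      ((EuclideanSpace.lipschitzWith_apply i).sub (LipschitzWith.const (x₀ i)))
    rwa [add_zero, mul_one] at h
  have h := (hcoord 0).min (hcoord 1)
  rwa [max_self] at h

lemma gradient_squareCutoff_eq_zero_of_forall_abs_lt (hx : ∀ i, |x i - x₀ i| < L) :
    gradient (squareCutoff L x₀) x = 0 := by
  have hU : IsOpen {y : EuclideanSpace ℝ (Fin 2) | ∀ i, |y i - x₀ i| < L} := by
    simp only [Set.ofPred_forall]
    exact isOpen_iInter_of_finite fun i => isOpen_lt (by fun_prop) continuous_const
  have hconst : squareCutoff L x₀ =ᶠ[𝓝 x] fun _ => 1 :=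
    eventually_of_mem (hU.mem_nhds hx) fun y hy => by
      simp [squareCutoff, trapezoidCutoff_eq_one_of_abs_lt (hy 0),
        trapezoidCutoff_eq_one_of_abs_lt (hy 1)]
  rw [hconst.gradient_eq, gradient_fun_const]

lemma gradient_squareCutoff_eq_zero_of_lt_abs (hL : 0 < L) {i : Fin 2}
    (hx : 3 * L < |x i - x₀ i|) : gradient (squareCutoff L x₀) x = 0 := by
  have hU : IsOpen {y : EuclideanSpace ℝ (Fin 2) | 3 * L < |y i - x₀ i|} :=
    isOpen_lt continuous_const (by fun_prop)
  have hconst : squareCutoff L x₀ =ᶠ[𝓝 x] fun _ => 0 :=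
    eventually_of_mem (hU.mem_nhds hx) fun y hy => by
      have h₀ := trapezoidCutoff_eq_zero_of_le_abs hL (le_of_lt hy)
      obtain rfl | rfl : i = 0 ∨ i = 1 := by omega
      all_goals simp [squareCutoff, h₀, trapezoidCutoff_nonneg]
  rw [hconst.gradient_eq, gradient_fun_const]

lemma norm_gradient_squareCutoff_sq_mul_le (hL : 0 < L)
    (hx : ∀ i, |x i - x₀ i| ≠ L ∧ |x i - x₀ i| ≠ 3 * L) {f : EuclideanSpace ℝ (Fin 2) → ℝ}
    (hf : 0 ≤ f) :
    ‖gradient (squareCutoff L x₀) x‖ ^ 2 * f x ≤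
      ∑ k ∈ cubeShifts (Fin 2),
        (openCube L (x₀ + cubeShift L k)).indicator (fun y => (2 * L)⁻¹ ^ 2 * f y) x := by
  have hterm_nonneg (k : Fin 2 → ℤ) :
      0 ≤ (openCube L (x₀ + cubeShift L k)).indicator (fun y => (2 * L)⁻¹ ^ 2 * f y) x :=
    Set.indicator_nonneg (fun y _ => mul_nonneg (by positivity) (hf y)) x
  obtain h₀ | ⟨k, hk, hxk⟩ : gradient (squareCutoff L x₀) x = 0 ∨
      ∃ k ∈ cubeShifts (Fin 2), x ∈ openCube L (x₀ + cubeShift L k) := by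
    by_cases hin : ∀ i, |x i - x₀ i| < L
    · exact .inl (gradient_squareCutoff_eq_zero_of_forall_abs_lt hin)
    by_cases hfar : ∃ i, 3 * L < |x i - x₀ i|
    · obtain ⟨i, hi⟩ := hfar
      exact .inl (gradient_squareCutoff_eq_zero_of_lt_abs hL hi)
    push Not at hin hfar
    obtain ⟨i, hi⟩ := hin
    exact .inr (exists_mem_openCube_add_cubeShift (fun j => (hfar j).lt_of_ne (hx j).2)
      (fun j => (hx j).1) ⟨i, hi.lt_of_ne' (hx i).1⟩)
  · simpa [h₀] using Finset.sum_nonneg fun k _ => hterm_nonneg k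
  · have hgrad : ‖gradient (squareCutoff L x₀) x‖ ≤ (2 * L)⁻¹ := by
      have h := norm_gradient_le_of_lipschitzWith (lipschitzWith_squareCutoff L.toNNReal x₀) x
      rwa [NNReal.coe_inv, NNReal.coe_mul, NNReal.coe_two, Real.coe_toNNReal L hL.le] at h
    calc ‖gradient (squareCutoff L x₀) x‖ ^ 2 * f x ≤ (2 * L)⁻¹ ^ 2 * f x := by
          gcongr
          exact hf x
      _ = (openCube L (x₀ + cubeShift L k)).indicator (fun y => (2 * L)⁻¹ ^ 2 * f y) x :=
          (Set.indicator_of_mem hxk fun y => (2 * L)⁻¹ ^ 2 * f y).symm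
      _ ≤ _ := Finset.single_le_sum (fun k _ => hterm_nonneg k) hk

end SquareCutoff

theorem gradient_cutoff_bound_general (L : ℝ) (hL : 0 < L)
    (ψ : EuclideanSpace ℝ (Fin 2) → ℝ) (hψ : MemLp ψ 2 volume)
    (φ₀ : ℝ → ℝ)
    (hdef : ∀ t, φ₀ t = if |t| < L then 1 else if 3 * L ≤ |t| then 0
      else 3 / 2 - |t| / (2 * L))
    (x₀ : EuclideanSpace ℝ (Fin 2))
    (hmax : ∀ y : EuclideanSpace ℝ (Fin 2),
      (∫ x in {x : EuclideanSpace ℝ (Fin 2) | ∀ i, x i - y i ∈ Set.Ioo (-L) L}, ψ x ^ 2) ≤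
      ∫ x in {x : EuclideanSpace ℝ (Fin 2) | ∀ i, x i - x₀ i ∈ Set.Ioo (-L) L}, ψ x ^ 2) :
    ∫ x, ‖gradient (fun y : EuclideanSpace ℝ (Fin 2) =>
        min (φ₀ (y 0 - x₀ 0)) (φ₀ (y 1 - x₀ 1))) x‖ ^ 2 * ψ x ^ 2 ≤
      (2 / L ^ 2) *
        ∫ x in {x : EuclideanSpace ℝ (Fin 2) | ∀ i, x i - x₀ i ∈ Set.Ioo (-L) L}, ψ x ^ 2 := by
  obtain rfl : φ₀ = trapezoidCutoff L :=
    funext fun t => (hdef t).trans (trapezoidCutoff_eq_ite hL t).symm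
  have hgeneric : ∀ᵐ x : EuclideanSpace ℝ (Fin 2), ∀ i, |x i - x₀ i| ≠ L ∧ |x i - x₀ i| ≠ 3 * L :=
    ae_all_iff.2 fun i =>
      (EuclideanSpace.ae_abs_apply_sub_ne i _ _).and (EuclideanSpace.ae_abs_apply_sub_ne i _ _)
  have hcard : (cubeShifts (Fin 2)).card = 8 := rfl
  calc _ ≤ (cubeShifts (Fin 2)).card * ((2 * L)⁻¹ ^ 2 * ∫ x in openCube L x₀, ψ x ^ 2) :=
        integral_le_card_mul_of_ae_le_sum_indicator
          (hψ.integrable_sq.const_mul _) (fun k _ => measurableSet_openCube L _)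
          (fun k _ => by
            rw [integral_const_mul]
            exact mul_le_mul_of_nonneg_left (hmax _) (by positivity))
          (ae_of_all _ fun x => by positivity)
          (hgeneric.mono fun x hx =>
            norm_gradient_squareCutoff_sq_mul_le hL hx fun y => sq_nonneg (ψ y))
    _ = _ := by
        rw [hcard, openCube]
        field_simp
        ring

/-- If `x₀ = (a,b)` maximizes the local mass `F(x₀) = ∫_{x₀+(-L,L)²}|ψ|²` and
`φ(x) = min{φ₀(ξ-a), φ₀(η-b)}` with `φ₀` the piecewise linear cutoff at scale `L`, then
`∫ |∇φ|² ψ² dx ≤ (2/L²) ∫_{x₀+(-L,L)²} |ψ|² dx`. -/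
theorem gradient_cutoff_bound (L : ℝ) (hL : 0 < L)
    (ψ : EuclideanSpace ℝ (Fin 2) → ℝ) (hψ : MemLp ψ 2 volume)
    (hpos : 0 < ∫ x, ψ x ^ 2)
    (φ₀ : ℝ → ℝ)
    (hdef : ∀ t, φ₀ t = if |t| < L then 1 else if 3 * L ≤ |t| then 0
      else 3 / 2 - |t| / (2 * L))
    (x₀ : EuclideanSpace ℝ (Fin 2))
    (hmax : ∀ y : EuclideanSpace ℝ (Fin 2),
      (∫ x in {x : EuclideanSpace ℝ (Fin 2) | ∀ i, x i - y i ∈ Set.Ioo (-L) L}, ψ x ^ 2) ≤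
      ∫ x in {x : EuclideanSpace ℝ (Fin 2) | ∀ i, x i - x₀ i ∈ Set.Ioo (-L) L}, ψ x ^ 2) :
    ∫ x, ‖gradient (fun y : EuclideanSpace ℝ (Fin 2) =>
        min (φ₀ (y 0 - x₀ 0)) (φ₀ (y 1 - x₀ 1))) x‖ ^ 2 * ψ x ^ 2 ≤
      (2 / L ^ 2) *
        ∫ x in {x : EuclideanSpace ℝ (Fin 2) | ∀ i, x i - x₀ i ∈ Set.Ioo (-L) L}, ψ x ^ 2 :=
  gradient_cutoff_bound_general L hL ψ hψ φ₀ hdef x₀ hmax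
end
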